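/- arXiv:2403.04986 — 4 statements merged into one kernel-verified Lean document; each statement's English description precedes it below -/
import Mathlib

section
/- Let q ≠ 3 be a rational prime and let w be a primitive cube root of unity in a number ring R containing v, v' with vv' = ±1. If q divides (in R) each of the three elements v² + v'² − 2, w²v² + wv'² − 2, and wv² + w²v'² − 2, then q divides 3wv², which is a unit times 3; hence no such prime q ≠ 3 exists. -/
open NumberField

/-- in the ring of integers `R = 𝓞 L` of a number field containing a primitive
cube root of unity `w` (i.e. `w² + w + 1 = 0`) and elements `v, v'` with `v v' = ±1`,
if a rational prime `q ≠ 3` divides each of `v² + v'² - 2`, `w²v² + w v'² - 2` and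
`w v² + w² v'² - 2`, then `q` divides `3 w v²` (a unit multiple of `3`); hence no such
prime `q ≠ 3` exists, i.e. we get a contradiction. -/
theorem stmt_2 (L : Type*) [Field L] [NumberField L]
    (w v v' : 𝓞 L) (hw : w ^ 2 + w + 1 = 0) (hvv' : v * v' = 1 ∨ v * v' = -1)
    (q : ℕ) (hq : q.Prime) (hq3 : q ≠ 3)
    (h0 : (q : 𝓞 L) ∣ (v ^ 2 + v' ^ 2 - 2))
    (h1 : (q : 𝓞 L) ∣ (w ^ 2 * v ^ 2 + w * v' ^ 2 - 2))
    (h2 : (q : 𝓞 L) ∣ (w * v ^ 2 + w ^ 2 * v' ^ 2 - 2)) :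
    (q : 𝓞 L) ∣ 3 * w * v ^ 2 ∧ False := by
  have hp : (v * v') ^ 2 = 1 := by
    rcases hvv' with h | h <;> rw [h] <;> ring
  have key : 3 * w * v ^ 2 =
      w * (v ^ 2 + v' ^ 2 - 2) + w ^ 2 * (w ^ 2 * v ^ 2 + w * v' ^ 2 - 2)
        + (w * v ^ 2 + w ^ 2 * v' ^ 2 - 2) := by
    linear_combination (-w * (w - 1) * v ^ 2 - w * v' ^ 2 + 2) * hw
  have hd : (q : 𝓞 L) ∣ 3 * w * v ^ 2 := by
    rw [key]
    exact dvd_add (dvd_add (h0.mul_left w) (h1.mul_left (w ^ 2))) h2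
  refine ⟨hd, ?_⟩
  have h9 : (q : 𝓞 L) ∣ 9 := by
    have := hd.mul_right (3 * w ^ 2 * v' ^ 2)
    have heq : (3 * w * v ^ 2) * (3 * w ^ 2 * v' ^ 2) = 9 := by
      linear_combination 9 * w ^ 3 * hp + 9 * (w - 1) * hw
    rwa [heq] at this
  have hcopZ : IsCoprime (q : ℤ) 9 := by
    rw [Int.isCoprime_iff_gcd_eq_one]
    have : Nat.Coprime q 9 := by
      have h3 : Nat.Coprime q 3 := (Nat.coprime_primes hq Nat.prime_three).mpr hq3
      simpa using Nat.Coprime.mul_right h3 h3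
    simpa [Int.gcd] using this
  have hcop : IsCoprime ((q : ℤ) : 𝓞 L) ((9 : ℤ) : 𝓞 L) := hcopZ.map (Int.castRingHom (𝓞 L))
  have hcop' : IsCoprime (q : 𝓞 L) (9 : 𝓞 L) := by push_cast at hcop; exact hcop
  have hu : IsUnit (q : 𝓞 L) := hcop'.isUnit_of_dvd' dvd_rfl h9
  have hcast : (q : 𝓞 L) = algebraMap (𝓞 ℚ) (𝓞 L) (q : 𝓞 ℚ) := by
    simp
  rw [hcast] at hu
  have hu2 : IsUnit (RingOfIntegers.norm ℚ (algebraMap (𝓞 ℚ) (𝓞 L) (q : 𝓞 ℚ))) :=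
    (RingOfIntegers.isUnit_norm ℚ).mpr hu
  rw [RingOfIntegers.norm_algebraMap] at hu2
  have hn : Module.finrank ℚ L ≠ 0 := Module.finrank_pos.ne'
  have hu3 : IsUnit ((q : 𝓞 ℚ)) := (isUnit_pow_iff hn).mp hu2
  have hqc : (q : ℚ) = (((q : 𝓞 ℚ) : ℚ)) := by push_cast; ring
  have hq2 := hq.two_le
  rcases Rat.RingOfIntegers.isUnit_iff.mp hu3 with h | h
  · rw [h] at hqc
    norm_cast at hqc
    omega
  · rw [h] at hqc
    have hpos : (0:ℚ) ≤ (q:ℚ) := by positivity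
    linarith
end

section
/- Let d > 1 be squarefree, O = O(d) the ring of integers of ℚ(√d), and let u ∈ O be such that the norm N(u) = n³ is a cube, u is not a cube in O, and no cube p³ of a rational prime divides u in O. Then the principal ideal (u) factors as (u) = 𝔄³ · q · 𝔔, where 𝔄 and 𝔔 are ideals of O, q is a squarefree positive integer with q = N(𝔔), and every rational prime dividing q splits in O. -/
/-!
Group the prime ideals dividing `(u)` by the rational prime `p` below them. Since `N((p)) = p²`,
either `(p)` is prime or `(p) = 𝔓₁𝔓₂` with `N(𝔓ᵢ) = p`. The `p`-part of `(u)` has norm a power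
of `p` and its cofactor has norm prime to `p`, so both norms are cubes because `N(u)` is. If `(p)`
is prime or `𝔓₁ = 𝔓₂`, this makes the `p`-part a cube. If `p` splits, the `p`-part is
`𝔓₁^a 𝔓₂^b` with `3 ∣ a + b`, and reducing `a` and `b` mod 3 leaves `1`, `𝔓₁𝔓₂² = (p)𝔓₂` or
`𝔓₁²𝔓₂ = (p)𝔓₁`.
-/

open Ideal Polynomial NumberField

theorem Nat.dvd_and_exists_eq_pow_of_prime_pow_mul_eq_pow {p e n m k : ℕ} (hp : p.Prime)
    (hpn : ¬p ∣ n) (h : p ^ e * n = m ^ k) : k ∣ e ∧ ∃ c, n = c ^ k := by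
  have hcop : (p ^ e).Coprime n := Nat.Coprime.pow_left e ((hp.coprime_iff_not_dvd).mpr hpn)
  obtain ⟨c, hc⟩ := exists_eq_pow_of_mul_eq_pow (Nat.isUnit_iff.mpr hcop) h
  refine ⟨⟨c.factorization p, ?_⟩,
    exists_eq_pow_of_mul_eq_pow (Nat.isUnit_iff.mpr hcop.symm) ((mul_comm _ _).trans h)⟩
  simpa [hp.factorization_self, Nat.factorization_pow, mul_comm] using
    congrArg (fun x => x.factorization p) hc

theorem Int.not_isSquare_of_squarefree {d : ℤ} (hsf : Squarefree d) (hd : 1 < d) :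
    ¬IsSquare d := by
  rintro ⟨r, rfl⟩
  rcases Int.isUnit_iff.mp (hsf r dvd_rfl) with rfl | rfl <;> norm_num at hd

section

variable {S : Type*} [CommRing S] [IsDedekindDomain S] [Module.Free ℤ S]

variable (S) in
def IsSplit (p : ℕ) : Prop :=
  ∃ P₁ P₂ : Ideal S, P₁.IsPrime ∧ P₂.IsPrime ∧ P₁ ≠ P₂ ∧ span {(p : S)} = P₁ * P₂

def HasCubeSplitFactorization (I : Ideal S) (q : ℕ) : Prop :=
  ∃ A Q : Ideal S, Squarefree q ∧ absNorm Q = q ∧ (∀ p : ℕ, p.Prime → p ∣ q → IsSplit S p) ∧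
    I = A ^ 3 * span {(q : S)} * Q

theorem hasCubeSplitFactorization_pow_three (A : Ideal S) :
    HasCubeSplitFactorization (A ^ 3) 1 :=
  ⟨A, ⊤, squarefree_one, absNorm_top, fun _ hp h => absurd (Nat.dvd_one.mp h) hp.ne_one,
    by simp⟩

namespace HasCubeSplitFactorization

variable {I J : Ideal S} {q q' : ℕ}

theorem dvd_absNorm (h : HasCubeSplitFactorization I q) : q ∣ absNorm I := by
  obtain ⟨A, Q, -, hQ, -, rfl⟩ := h
  exact hQ ▸ absNorm_dvd_absNorm_of_le (le_of_dvd (dvd_mul_left _ _))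

theorem mul (hI : HasCubeSplitFactorization I q) (hJ : HasCubeSplitFactorization J q')
    (hqq' : q.Coprime q') : HasCubeSplitFactorization (I * J) (q * q') := by
  obtain ⟨A, Q, hq, hQ, hsplit, rfl⟩ := hI
  obtain ⟨A', Q', hq', hQ', hsplit', rfl⟩ := hJ
  refine ⟨A * A', Q * Q', (Nat.squarefree_mul hqq').mpr ⟨hq, hq'⟩, by rw [map_mul, hQ, hQ'],
    fun p hp hpqq' => (hp.dvd_mul.mp hpqq').elim (hsplit p hp) (hsplit' p hp), ?_⟩
  rw [Nat.cast_mul, ← span_singleton_mul_span_singleton]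
  ring

end HasCubeSplitFactorization

variable {p : ℕ} {P₁ P₂ : Ideal S}

theorem hasCubeSplitFactorization_mul_sq (hp : p.Prime) (h₁ : Prime P₁) (h₂ : Prime P₂)
    (hne : P₁ ≠ P₂) (hsp : span {(p : S)} = P₁ * P₂) (hn₂ : absNorm P₂ = p) :
    HasCubeSplitFactorization (P₁ * P₂ ^ 2) p := by
  refine ⟨⊤, P₂, hp.prime.squarefree, hn₂, fun l hl hlp => ?_,
    by rw [hsp, top_pow, ← one_eq_top]; ring⟩
  rw [(Nat.prime_dvd_prime_iff_eq hl hp).mp hlp]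
  exact ⟨P₁, P₂, isPrime_of_prime h₁, isPrime_of_prime h₂, hne, hsp⟩

theorem exists_hasCubeSplitFactorization_pow_mul_pow (hp : p.Prime) (h₁ : Prime P₁)
    (h₂ : Prime P₂) (hsp : span {(p : S)} = P₁ * P₂) (hn₁ : absNorm P₁ = p)
    (hn₂ : absNorm P₂ = p) {a b : ℕ} (hab : 3 ∣ a + b) :
    ∃ q, q ∣ p ∧ HasCubeSplitFactorization (P₁ ^ a * P₂ ^ b) q := by
  by_cases hne : P₁ = P₂
  · subst hne
    obtain ⟨c, hc⟩ := hab
    refine ⟨1, one_dvd p, ?_⟩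
    rw [← pow_add, hc, pow_mul']
    exact hasCubeSplitFactorization_pow_three _
  obtain ⟨i, r, hr, rfl⟩ : ∃ i r, r < 3 ∧ a = 3 * i + r := ⟨a / 3, a % 3, by omega, by omega⟩
  obtain ⟨j, s, hs, rfl⟩ : ∃ j s, s < 3 ∧ b = 3 * j + s := ⟨b / 3, b % 3, by omega, by omega⟩
  have hcube := hasCubeSplitFactorization_pow_three (P₁ ^ i * P₂ ^ j)
  rw [show P₁ ^ (3 * i + r) * P₂ ^ (3 * j + s) = (P₁ ^ i * P₂ ^ j) ^ 3 * (P₁ ^ r * P₂ ^ s) by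
    ring]
  obtain ⟨rfl, rfl⟩ | ⟨rfl, rfl⟩ | ⟨rfl, rfl⟩ :
      r = 0 ∧ s = 0 ∨ r = 1 ∧ s = 2 ∨ r = 2 ∧ s = 1 := by omega
  · exact ⟨1, one_dvd p, by simpa using hcube⟩
  · refine ⟨1 * p, by simp, hcube.mul ?_ (Nat.coprime_one_left p)⟩
    simpa using hasCubeSplitFactorization_mul_sq hp h₁ h₂ hne hsp hn₂
  · refine ⟨1 * p, by simp, hcube.mul ?_ (Nat.coprime_one_left p)⟩
    simpa [mul_comm] using
      hasCubeSplitFactorization_mul_sq hp h₂ h₁ (Ne.symm hne) (hsp.trans (mul_comm _ _)) hn₁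

theorem span_natCast_prime_or_eq_mul (hp : p.Prime) (h2 : absNorm (span {(p : S)}) = p ^ 2) :
    Prime (span {(p : S)}) ∨ ∃ P₁ P₂ : Ideal S, Prime P₁ ∧ Prime P₂ ∧ absNorm P₁ = p ∧
      absNorm P₂ = p ∧ span {(p : S)} = P₁ * P₂ := by
  have hne_top : span {(p : S)} ≠ ⊤ := fun h => by
    rw [h, absNorm_top] at h2
    nlinarith [hp.two_le]
  obtain ⟨P, hPmax, hpP⟩ := exists_le_maximal _ hne_top
  obtain ⟨J, hPJ⟩ := dvd_iff_le.mpr hpP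
  have hnorm : absNorm P * absNorm J = p ^ 2 := by rw [← map_mul, ← hPJ, h2]
  have hP : Prime P := prime_of_isPrime (fun h => by
    rw [h, absNorm_bot, zero_mul] at hnorm
    exact pow_ne_zero 2 hp.ne_zero hnorm.symm) hPmax.isPrime
  obtain ⟨k, hk, hPk⟩ := (Nat.dvd_prime_pow hp).mp (Dvd.intro _ hnorm)
  have hk0 : k ≠ 0 := fun h => hPmax.ne_top (absNorm_eq_one_iff.mp (by simpa [h] using hPk))
  obtain rfl | rfl : k = 1 ∨ k = 2 := by omega
  · right
    have hJ : absNorm J = p := by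
      rw [hPk, pow_one, sq] at hnorm
      exact Nat.eq_of_mul_eq_mul_left hp.pos hnorm
    have hJprime : Prime J := UniqueFactorizationMonoid.irreducible_iff_prime.mp
      (irreducible_of_irreducible_absNorm (hJ ▸ hp))
    exact ⟨P, J, hP, hJprime, by rw [hPk, pow_one], hJ, hPJ⟩
  · left
    have hJ : J = ⊤ := by
      rw [hPk] at hnorm
      exact absNorm_eq_one_iff.mp
        (Nat.eq_of_mul_eq_mul_left (pow_pos hp.pos 2) (hnorm.trans (mul_one _).symm))
    rwa [hPJ, hJ, ← one_eq_top, mul_one]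

variable [Module.Finite ℤ S]

theorem not_dvd_absNorm_of_forall_prime_dvd (hp : p.Prime) {J : Ideal S}
    (h : ∀ P : Ideal S, Prime P → P ∣ span {(p : S)} → ¬P ∣ J) : ¬p ∣ absNorm J := by
  intro hpJ
  obtain ⟨P, hPmax, hPp, hPJ⟩ := exists_isMaximal_dvd_of_dvd_absNorm' hp J hpJ
  have : IsAddTorsionFree S := .of_isTorsionFree ℤ _
  have := CharZero.of_isAddTorsionFree S S
  have hpP : (p : S) ∈ P := by
    simpa using (hPp ▸ mem_span_singleton_self (p : ℤ) : (p : ℤ) ∈ P.under ℤ)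
  exact h P (prime_of_isPrime (IsMaximal.ne_bot_of_isIntegral_int P) hPmax.isPrime)
    (dvd_span_singleton.mpr hpP) hPJ

theorem exists_eq_pow_three_mul_of_prime_span (hp : p.Prime) (hprime : Prime (span {(p : S)}))
    (h2 : absNorm (span {(p : S)}) = p ^ 2) {I : Ideal S} (hI : I ≠ ⊥) {m : ℕ}
    (hm : absNorm I = m ^ 3) :
    ∃ A J : Ideal S, I = A ^ 3 * J ∧ ¬p ∣ absNorm J ∧ ∃ k, absNorm J = k ^ 3 := by
  obtain ⟨J, hIJ, hpJ⟩ :=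
    (FiniteMultiplicity.of_prime_left hprime hI).exists_eq_pow_mul_and_not_dvd
  set a := multiplicity (span {(p : S)}) I
  have hpJ' : ¬p ∣ absNorm J := not_dvd_absNorm_of_forall_prime_dvd hp fun P hP hPp hPJ =>
    hpJ (associated_iff_eq.mp (hP.associated_of_dvd hprime hPp) ▸ hPJ)
  obtain ⟨h3, hJ⟩ := Nat.dvd_and_exists_eq_pow_of_prime_pow_mul_eq_pow (e := 2 * a) hp hpJ'
    (by rw [← hm, hIJ, map_mul, map_pow, h2, ← pow_mul])
  obtain ⟨i, hi⟩ : 3 ∣ a := Nat.Coprime.dvd_of_dvd_mul_left (by norm_num) h3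
  exact ⟨span {(p : S)} ^ i, J, by rw [hIJ, hi, pow_mul'], hpJ', hJ⟩

theorem exists_eq_pow_mul_pow_mul (hp : p.Prime) (h₁ : Prime P₁) (h₂ : Prime P₂)
    (hsp : span {(p : S)} = P₁ * P₂) (hn₁ : absNorm P₁ = p) (hn₂ : absNorm P₂ = p)
    {I : Ideal S} (hI : I ≠ ⊥) {m : ℕ} (hm : absNorm I = m ^ 3) :
    ∃ a b : ℕ, ∃ J : Ideal S, I = P₁ ^ a * P₂ ^ b * J ∧ 3 ∣ a + b ∧ ¬p ∣ absNorm J ∧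
      ∃ k, absNorm J = k ^ 3 := by
  obtain ⟨J₁, hIJ₁, hP₁J₁⟩ :=
    (FiniteMultiplicity.of_prime_left h₁ hI).exists_eq_pow_mul_and_not_dvd
  have hJ₁ : J₁ ≠ ⊥ := by
    rintro rfl
    exact hI (by rw [hIJ₁, bot_eq_zero, mul_zero])
  obtain ⟨J, hJ₁J, hP₂J⟩ :=
    (FiniteMultiplicity.of_prime_left h₂ hJ₁).exists_eq_pow_mul_and_not_dvd
  set a := multiplicity P₁ I
  set b := multiplicity P₂ J₁
  have hIJ : I = P₁ ^ a * P₂ ^ b * J := by rw [hIJ₁, hJ₁J, mul_assoc]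
  have hpJ : ¬p ∣ absNorm J := not_dvd_absNorm_of_forall_prime_dvd hp fun P hP hPp hPJ => by
    rcases hP.dvd_mul.mp (hsp ▸ hPp) with h | h
    · rw [associated_iff_eq.mp (hP.associated_of_dvd h₁ h)] at hPJ
      exact hP₁J₁ (hJ₁J ▸ dvd_mul_of_dvd_right hPJ _)
    · exact hP₂J (associated_iff_eq.mp (hP.associated_of_dvd h₂ h) ▸ hPJ)
  obtain ⟨h3, hJ⟩ := Nat.dvd_and_exists_eq_pow_of_prime_pow_mul_eq_pow (e := a + b) hp hpJ
    (by rw [← hm, hIJ, map_mul, map_mul, map_pow, map_pow, hn₁, hn₂, pow_add])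
  exact ⟨a, b, J, hIJ, h3, hpJ, hJ⟩

theorem exists_eq_mul_hasCubeSplitFactorization (hp : p.Prime)
    (h2 : absNorm (span {(p : S)}) = p ^ 2) {I : Ideal S} (hI : I ≠ ⊥) {m : ℕ}
    (hm : absNorm I = m ^ 3) :
    ∃ L J : Ideal S, ∃ q, I = L * J ∧ q ∣ p ∧ HasCubeSplitFactorization L q ∧
      ¬p ∣ absNorm J ∧ ∃ k, absNorm J = k ^ 3 := by
  rcases span_natCast_prime_or_eq_mul hp h2 with hprime | ⟨P₁, P₂, h₁, h₂, hn₁, hn₂, hsp⟩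
  · obtain ⟨A, J, rfl, hpJ, hJ⟩ := exists_eq_pow_three_mul_of_prime_span hp hprime h2 hI hm
    exact ⟨A ^ 3, J, 1, rfl, one_dvd p, hasCubeSplitFactorization_pow_three A, hpJ, hJ⟩
  · obtain ⟨a, b, J, rfl, hab, hpJ, hJ⟩ := exists_eq_pow_mul_pow_mul hp h₁ h₂ hsp hn₁ hn₂ hI hm
    obtain ⟨q, hqp, hq⟩ := exists_hasCubeSplitFactorization_pow_mul_pow hp h₁ h₂ hsp hn₁ hn₂ hab
    exact ⟨_, J, q, rfl, hqp, hq, hpJ, hJ⟩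

theorem exists_hasCubeSplitFactorization
    (h2 : ∀ p : ℕ, p.Prime → absNorm (span {(p : S)}) = p ^ 2) {I : Ideal S} {m : ℕ}
    (hm : absNorm I = m ^ 3) : ∃ q, HasCubeSplitFactorization I q := by
  induction hN : absNorm I using Nat.strong_induction_on generalizing I m with
  | _ N ih =>
  by_cases hI : I = ⊥
  · exact ⟨1, by simpa [hI] using hasCubeSplitFactorization_pow_three (⊥ : Ideal S)⟩
  by_cases hN1 : N = 1
  · rw [absNorm_eq_one_iff.mp (hN.trans hN1)]
    exact ⟨1, top_pow S 3 ▸ hasCubeSplitFactorization_pow_three ⊤⟩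
  obtain ⟨p, hp, hpN⟩ := Nat.exists_prime_and_dvd hN1
  obtain ⟨L, J, q, rfl, hqp, hL, hpJ, k, hk⟩ :=
    exists_eq_mul_hasCubeSplitFactorization hp (h2 p hp) hI hm
  have hJN : absNorm J ∣ N := hN ▸ Dvd.intro_left _ (map_mul absNorm L J).symm
  have hlt : absNorm J < N := lt_of_le_of_ne
    (Nat.le_of_dvd (Nat.pos_of_ne_zero (hN ▸ absNorm_eq_zero_iff.not.mpr hI)) hJN)
    (fun h => hpJ (h ▸ hpN))
  obtain ⟨q', hJ⟩ := ih _ hlt hk rfl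
  exact ⟨q * q', hL.mul hJ (Nat.Coprime.coprime_dvd_left hqp
    ((hp.coprime_iff_not_dvd).mpr fun h => hpJ (h.trans hJ.dvd_absNorm)))⟩

end

theorem finrank_eq_two_of_fieldRange_eq_adjoin_sqrt {d : ℤ} (hd : 0 ≤ d) (hsq : ¬IsSquare d)
    {K : Type*} [Field K] [Algebra ℚ K] (ιK : K →ₐ[ℚ] ℂ)
    (hK : ιK.fieldRange = IntermediateField.adjoin ℚ {((√d : ℝ) : ℂ)}) :
    Module.finrank ℚ K = 2 := by
  set α : ℂ := ((√d : ℝ) : ℂ)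
  have hα : aeval α (X ^ 2 - C (d : ℚ)) = 0 := by
    simp [α, ← Complex.ofReal_pow, Real.sq_sqrt (Int.cast_nonneg_iff.mpr hd)]
  have hmonic : (X ^ 2 - C (d : ℚ)).Monic := monic_X_pow_sub_C _ two_ne_zero
  have hirr : Irreducible (X ^ 2 - C (d : ℚ)) :=
    X_pow_sub_C_irreducible_of_prime Nat.prime_two fun b hb =>
      hsq (Rat.isSquare_intCast_iff.mp ⟨b, by rw [← hb, sq]⟩)
  calc Module.finrank ℚ K = Module.finrank ℚ ιK.fieldRange :=
        ιK.equivFieldRange.toLinearEquiv.finrank_eq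
    _ = 2 := by
      rw [hK, IntermediateField.adjoin.finrank ⟨_, hmonic, hα⟩,
        ← minpoly.eq_of_irreducible_of_monic hirr hα hmonic, natDegree_X_pow_sub_C]

theorem stmt_16_general (d : ℤ) (hd : 1 < d) (hsf : Squarefree d)
    (K : Type*) [Field K] [NumberField K] (ιK : K →ₐ[ℚ] ℂ)
    (hK : ιK.fieldRange = IntermediateField.adjoin ℚ {((Real.sqrt d : ℝ) : ℂ)})
    (u : 𝓞 K) (n : ℤ) (hnorm : Algebra.norm ℤ u = n ^ 3) :
    ∃ (A Q : Ideal (𝓞 K)) (q : ℕ), Squarefree q ∧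
      Ideal.absNorm Q = q ∧
      (∀ p : ℕ, p.Prime → p ∣ q →
        ∃ P₁ P₂ : Ideal (𝓞 K), P₁.IsPrime ∧ P₂.IsPrime ∧ P₁ ≠ P₂ ∧
          Ideal.span {(p : 𝓞 K)} = P₁ * P₂) ∧
      Ideal.span {u} = A ^ 3 * Ideal.span {(q : 𝓞 K)} * Q := by
  have hrank : Module.finrank ℤ (𝓞 K) = 2 := by
    rw [RingOfIntegers.rank]
    exact finrank_eq_two_of_fieldRange_eq_adjoin_sqrt (by omega)
      (Int.not_isSquare_of_squarefree hsf hd) ιK hK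
  have hcube : absNorm (span {u}) = n.natAbs ^ 3 := by
    rw [absNorm_span_singleton, hnorm, Int.natAbs_pow]
  obtain ⟨q, A, Q, hq⟩ := exists_hasCubeSplitFactorization
    (fun p _ => by rw [absNorm_span_natCast, hrank]) hcube
  exact ⟨A, Q, q, hq⟩

/-- let `K = ℚ(√d)` with ring of integers `O = 𝓞 K`, and `u ∈ O` with
cubic norm `n³`, `u` not a cube in `O`, and not divisible by the cube of any rational
prime. Then `(u) = 𝔄³ · (q) · 𝔔` with `q` squarefree, `q = N(𝔔)`, and every rational
prime dividing `q` splits in `O`. -/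
theorem stmt_16 (d : ℤ) (hd : 1 < d) (hsf : Squarefree d)
    (K : Type*) [Field K] [NumberField K] (ιK : K →ₐ[ℚ] ℂ)
    (hK : ιK.fieldRange = IntermediateField.adjoin ℚ {((Real.sqrt d : ℝ) : ℂ)})
    (u : 𝓞 K) (n : ℤ) (hnorm : Algebra.norm ℤ u = n ^ 3)
    (hnotcube : ¬∃ w : 𝓞 K, u = w ^ 3)
    (hnocubediv : ∀ p : ℕ, p.Prime → ¬((p : 𝓞 K) ^ 3 ∣ u)) :
    ∃ (A Q : Ideal (𝓞 K)) (q : ℕ), Squarefree q ∧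
      Ideal.absNorm Q = q ∧
      (∀ p : ℕ, p.Prime → p ∣ q →
        ∃ P₁ P₂ : Ideal (𝓞 K), P₁.IsPrime ∧ P₂.IsPrime ∧ P₁ ≠ P₂ ∧
          Ideal.span {(p : 𝓞 K)} = P₁ * P₂) ∧
      Ideal.span {u} = A ^ 3 * Ideal.span {(q : 𝓞 K)} * Q :=
  stmt_16_general d hd hsf K ιK hK u n hnorm
end

section
/- Let d > 1 be squarefree and let β, γ ∈ R_d with 3 ∤ N(γ). If β ∈ P_d and γ ∈ P_d, then βγ ∈ P_d. -/
def HalfCongr (A c M : ℤ) : Prop := A ≡ 2 * c [ZMOD M]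

def MemPd (d : ℤ) (a b : ℚ) : Prop :=
  IsIntegral ℤ ((a : ℝ) + b * Real.sqrt d) ∧
  ∃ n A : ℤ, (A : ℚ) = 2 * a ∧ a ^ 2 - d * b ^ 2 = (n : ℚ) ^ 3 ∧
    (((n % 9 = 2 ∨ n % 9 = 5 ∨ n % 9 = 8) →
        ∃ c ∈ ([0, 2, -2, 7, -7, 9, -9, 11, -11] : List ℤ), HalfCongr A c 27) ∧
     (n % 9 = 1 → ∃ c ∈ ([0, 1, -1, 9, -9] : List ℤ), HalfCongr A c 27) ∧
     (n % 9 = 4 → ∃ c ∈ ([0, 8, -8, 9, -9] : List ℤ), HalfCongr A c 27) ∧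
     (n % 9 = 7 → ∃ c ∈ ([0, 9, -9, 10, -10] : List ℤ), HalfCongr A c 27) ∧
     (n % 9 = 0 → ∃ c ∈ ([4, -4, 5, -5, 13, -13] : List ℤ), HalfCongr A c 27) ∧
     ((n % 9 = 3 ∨ n % 9 = 6) →
        ∃ c ∈ ([0, 4, -4, 5, -5, 9, -9, 13, -13] : List ℤ), HalfCongr A c 27))

def MemRd (d : ℤ) (a b : ℚ) : Prop :=
  ∃ r s n : ℚ, IsIntegral ℤ ((r : ℝ) + s * Real.sqrt d) ∧
    n = r ^ 2 - d * s ^ 2 ∧ a = n * r ∧ b = n * s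

/-!
Write `a = A / 2` and `b = B / 2`. Since `d` is squarefree, `d B² = A² - 4n³` forces `B ∈ ℤ`.
The norm is multiplicative, products of algebraic integers are integral, and the new `A`,
namely `(A₁A₂ + dB₁B₂) / 2`, is an integer because `A² ≡ dB² (mod 4)` with `4 ∤ d`.
For the congruence, `n³ mod 27` only depends on `n mod 9`, and modulo 27 the new `a` is
`a₁a₂ + y` with `y = d b₁ b₂`, where `y² = (a₁² - n₁³)(a₂² - n₂³)` and `27 ∣ y` once 27 divides
both factors (as then `27² ∣ y²`). This leaves a finite check over the admissible residues.
-/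

theorem Rat.exists_int_eq_of_squarefree_mul_sq {d m : ℤ} (hd : Squarefree d) {q : ℚ}
    (h : d * q ^ 2 = m) : ∃ B : ℤ, (B : ℚ) = q := by
  have hq : d * q.num ^ 2 = (q.den : ℤ) ^ 2 * m := by
    rw [← Rat.num_div_den q] at h
    field_simp at h
    exact_mod_cast h
  have hden : (q.den : ℤ) ^ 2 ∣ d :=
    (Int.isCoprime_iff_gcd_eq_one.mpr (by simpa [Int.gcd] using q.reduced.symm)).pow
      |>.dvd_of_dvd_mul_right ⟨m, hq⟩
  have hunit : IsUnit (q.den : ℤ) := hd _ (by rwa [← sq])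
  refine ⟨q.num, ?_⟩
  rw [Int.isUnit_iff] at hunit
  rw [← Rat.num_div_den q, show q.den = 1 by omega]
  simp

theorem Int.cube_modEq_of_modEq_nine {a b : ℤ} (h : a ≡ b [ZMOD 9]) :
    a ^ 3 ≡ b ^ 3 [ZMOD 27] := by
  obtain ⟨k, hk⟩ := h.dvd
  refine Int.modEq_iff_dvd.mpr ⟨a ^ 2 * k + 9 * a * k ^ 2 + 27 * k ^ 3, ?_⟩
  rw [show b = a + 9 * k by linarith]
  ring

theorem two_dvd_mul_add_mul {d A₁ B₁ A₂ B₂ : ℤ} (hd : ¬ 4 ∣ d)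
    (h₁ : 4 ∣ A₁ ^ 2 - d * B₁ ^ 2) (h₂ : 4 ∣ A₂ ^ 2 - d * B₂ ^ 2) :
    2 ∣ A₁ * A₂ + d * B₁ * B₂ := by
  have key : ∀ d A₁ B₁ A₂ B₂ : ZMod 4, d ≠ 0 → A₁ ^ 2 - d * B₁ ^ 2 = 0 →
      A₂ ^ 2 - d * B₂ ^ 2 = 0 → 2 * (A₁ * A₂ + d * B₁ * B₂) = 0 := by
    decide
  have h := key d A₁ B₁ A₂ B₂
    (by exact_mod_cast mt (ZMod.intCast_zmod_eq_zero_iff_dvd d 4).mp hd)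
    (by exact_mod_cast (ZMod.intCast_zmod_eq_zero_iff_dvd _ 4).mpr h₁)
    (by exact_mod_cast (ZMod.intCast_zmod_eq_zero_iff_dvd _ 4).mpr h₂)
  rw [← mul_dvd_mul_iff_left two_ne_zero]
  exact_mod_cast (ZMod.intCast_zmod_eq_zero_iff_dvd _ 4).mp (by exact_mod_cast h)

theorem add_mul_sqrt_mul_add_mul_sqrt {d : ℤ} (hd : 0 ≤ d) (a₁ b₁ a₂ b₂ : ℚ) :
    ((a₁ : ℝ) + b₁ * Real.sqrt d) * ((a₂ : ℝ) + b₂ * Real.sqrt d) =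
      ((a₁ * a₂ + d * b₁ * b₂ : ℚ) : ℝ) + (a₁ * b₂ + b₁ * a₂ : ℚ) * Real.sqrt d := by
  have hs : Real.sqrt d ^ 2 = d := Real.sq_sqrt (by exact_mod_cast hd)
  push_cast
  linear_combination ((b₁ : ℝ) * b₂) * hs

def admissibleResidues (m : ℤ) : List ℤ :=
  if m = 0 then [4, -4, 5, -5, 13, -13]
  else if m = 1 then [0, 1, -1, 9, -9]
  else if m = 4 then [0, 8, -8, 9, -9]
  else if m = 7 then [0, 9, -9, 10, -10]
  else if m = 3 ∨ m = 6 then [0, 4, -4, 5, -5, 9, -9, 13, -13]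
  else [0, 2, -2, 7, -7, 9, -9, 11, -11]

def IsAdmissible (n A : ℤ) : Prop := ∃ c ∈ admissibleResidues (n % 9), HalfCongr A c 27

theorem residueConditions_iff (n A : ℤ) :
    (((n % 9 = 2 ∨ n % 9 = 5 ∨ n % 9 = 8) →
        ∃ c ∈ ([0, 2, -2, 7, -7, 9, -9, 11, -11] : List ℤ), HalfCongr A c 27) ∧
     (n % 9 = 1 → ∃ c ∈ ([0, 1, -1, 9, -9] : List ℤ), HalfCongr A c 27) ∧
     (n % 9 = 4 → ∃ c ∈ ([0, 8, -8, 9, -9] : List ℤ), HalfCongr A c 27) ∧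
     (n % 9 = 7 → ∃ c ∈ ([0, 9, -9, 10, -10] : List ℤ), HalfCongr A c 27) ∧
     (n % 9 = 0 → ∃ c ∈ ([4, -4, 5, -5, 13, -13] : List ℤ), HalfCongr A c 27) ∧
     ((n % 9 = 3 ∨ n % 9 = 6) →
        ∃ c ∈ ([0, 4, -4, 5, -5, 9, -9, 13, -13] : List ℤ), HalfCongr A c 27)) ↔
    IsAdmissible n A := by
  have : n % 9 = 0 ∨ n % 9 = 1 ∨ n % 9 = 2 ∨ n % 9 = 3 ∨ n % 9 = 4 ∨ n % 9 = 5 ∨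
      n % 9 = 6 ∨ n % 9 = 7 ∨ n % 9 = 8 := by omega
  rcases this with h | h | h | h | h | h | h | h | h <;>
    simp [IsAdmissible, admissibleResidues, h]

theorem memPd_iff {d : ℤ} {a b : ℚ} :
    MemPd d a b ↔ IsIntegral ℤ ((a : ℝ) + b * Real.sqrt d) ∧
      ∃ n A : ℤ, (A : ℚ) = 2 * a ∧ a ^ 2 - d * b ^ 2 = (n : ℚ) ^ 3 ∧ IsAdmissible n A := by
  simp only [MemPd, residueConditions_iff]

theorem exists_int_two_mul_of_norm_eq {d n A : ℤ} (hd : Squarefree d) {a b : ℚ}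
    (hA : (A : ℚ) = 2 * a) (hn : a ^ 2 - d * b ^ 2 = n ^ 3) :
    ∃ B : ℤ, (B : ℚ) = 2 * b ∧ d * B ^ 2 = A ^ 2 - 4 * n ^ 3 := by
  have hq : (d : ℚ) * (2 * b) ^ 2 = ((A ^ 2 - 4 * n ^ 3 : ℤ) : ℚ) := by
    push_cast
    linear_combination (-4 : ℚ) * hn - ((A : ℚ) + 2 * a) * hA
  obtain ⟨B, hB⟩ := Rat.exists_int_eq_of_squarefree_mul_sq hd hq
  exact ⟨B, hB, by rw [← hB] at hq; exact_mod_cast hq⟩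

theorem halfCongr_iff {A c : ℤ} : HalfCongr A c 27 ↔ (A : ZMod 27) = 2 * c := by
  rw [HalfCongr, show (27 : ℤ) = ((27 : ℕ) : ℤ) from rfl, ← ZMod.intCast_eq_intCast_iff]
  push_cast
  rfl

theorem cast_sq_sub_four_mul_cube {n A c : ℤ} (h : HalfCongr A c 27) :
    ((A ^ 2 - 4 * n ^ 3 : ℤ) : ZMod 27) = 4 * ((c ^ 2 - (n % 9) ^ 3 : ℤ) : ZMod 27) := by
  have hcube : ((n ^ 3 : ℤ) : ZMod 27) = ((n % 9) ^ 3 : ℤ) :=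
    (ZMod.intCast_eq_intCast_iff _ _ 27).mpr
      (Int.cube_modEq_of_modEq_nine (Int.mod_modEq n 9).symm)
  push_cast at hcube ⊢
  rw [halfCongr_iff.mp h, hcube]
  ring

set_option maxHeartbeats 4000000 in
/-- `c₁, c₂` are the residues of `a₁, a₂` and `y` that of `d b₁ b₂`, modulo 27. -/
theorem residue_table : ∀ m₁ ∈ ([0, 1, 2, 3, 4, 5, 6, 7, 8] : List ℤ),
    ∀ m₂ ∈ ([1, 2, 4, 5, 7, 8] : List ℤ),
    ∀ c₁ ∈ admissibleResidues m₁, ∀ c₂ ∈ admissibleResidues m₂, ∀ y : ZMod 27,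
    y ^ 2 = (((c₁ ^ 2 - m₁ ^ 3) * (c₂ ^ 2 - m₂ ^ 3) : ℤ) : ZMod 27) →
    (((c₁ ^ 2 - m₁ ^ 3 : ℤ) : ZMod 27) = 0 → ((c₂ ^ 2 - m₂ ^ 3 : ℤ) : ZMod 27) = 0 → y = 0) →
    ∃ c ∈ admissibleResidues (m₁ * m₂ % 9), ((c₁ * c₂ : ℤ) : ZMod 27) + y = c := by
  decide

theorem IsAdmissible.mul {d n₁ n₂ A₁ A₂ B₁ B₂ A : ℤ}
    (ha₁ : IsAdmissible n₁ A₁) (ha₂ : IsAdmissible n₂ A₂) (hn₂ : ¬ 3 ∣ n₂)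
    (h₁ : d * B₁ ^ 2 = A₁ ^ 2 - 4 * n₁ ^ 3) (h₂ : d * B₂ ^ 2 = A₂ ^ 2 - 4 * n₂ ^ 3)
    (hA : 2 * A = A₁ * A₂ + d * B₁ * B₂) : IsAdmissible (n₁ * n₂) A := by
  obtain ⟨c₁, hc₁, hA₁⟩ := ha₁
  obtain ⟨c₂, hc₂, hA₂⟩ := ha₂
  have hm₁ : n₁ % 9 ∈ ([0, 1, 2, 3, 4, 5, 6, 7, 8] : List ℤ) := by
    simp only [List.mem_cons]; omega
  have hm₂ : n₂ % 9 ∈ ([1, 2, 4, 5, 7, 8] : List ℤ) := by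
    simp only [List.mem_cons]; omega
  have hx : (d * B₁ * B₂) ^ 2 = (A₁ ^ 2 - 4 * n₁ ^ 3) * (A₂ ^ 2 - 4 * n₂ ^ 3) := by
    rw [← h₁, ← h₂]; ring
  have e₁ := cast_sq_sub_four_mul_cube (n := n₁) hA₁
  have e₂ := cast_sq_sub_four_mul_cube (n := n₂) hA₂
  -- `7 = 4⁻¹` in `ZMod 27`, so `7 * (d B₁ B₂)` is the residue of `d b₁ b₂`.
  have hsq : (7 * ((d * B₁ * B₂ : ℤ) : ZMod 27)) ^ 2 =
      (((c₁ ^ 2 - (n₁ % 9) ^ 3) * (c₂ ^ 2 - (n₂ % 9) ^ 3) : ℤ) : ZMod 27) := by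
    have hx' := congrArg (Int.cast : ℤ → ZMod 27) hx
    push_cast at hx' e₁ e₂ ⊢
    rw [e₁, e₂] at hx'
    linear_combination (norm := (ring_nf; reduce_mod_char)) 49 * hx'
  have hzero : ((c₁ ^ 2 - (n₁ % 9) ^ 3 : ℤ) : ZMod 27) = 0 →
      ((c₂ ^ 2 - (n₂ % 9) ^ 3 : ℤ) : ZMod 27) = 0 → 7 * ((d * B₁ * B₂ : ℤ) : ZMod 27) = 0 := by
    intro z₁ z₂
    have hdvd : 27 ^ 2 ∣ (d * B₁ * B₂) ^ 2 := by
      rw [hx, sq]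
      exact mul_dvd_mul ((ZMod.intCast_zmod_eq_zero_iff_dvd _ 27).mp (by rw [e₁, z₁, mul_zero]))
        ((ZMod.intCast_zmod_eq_zero_iff_dvd _ 27).mp (by rw [e₂, z₂, mul_zero]))
    rw [(ZMod.intCast_zmod_eq_zero_iff_dvd _ 27).mpr
      ((Int.pow_dvd_pow_iff two_ne_zero).mp hdvd), mul_zero]
  obtain ⟨c, hc, hy⟩ := residue_table _ hm₁ _ hm₂ c₁ hc₁ c₂ hc₂ _ hsq hzero
  refine ⟨c, by rwa [Int.mul_emod], halfCongr_iff.mpr ?_⟩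
  have hA' := congrArg (Int.cast : ℤ → ZMod 27) hA
  push_cast at hA' hy ⊢
  linear_combination (norm := (ring_nf; reduce_mod_char))
    14 * hA' + 14 * (A₂ : ZMod 27) * halfCongr_iff.mp hA₁ + c₁ * halfCongr_iff.mp hA₂ + 2 * hy

theorem stmt_18_general (d : ℤ) (hd : 1 < d) (hsf : Squarefree d)
    (a₁ b₁ a₂ b₂ : ℚ)
    (Nγ : ℤ) (hNγ : (Nγ : ℚ) = a₂ ^ 2 - d * b₂ ^ 2) (h3 : ¬(3 : ℤ) ∣ Nγ)
    (hβP : MemPd d a₁ b₁) (hγP : MemPd d a₂ b₂) :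
    MemPd d (a₁ * a₂ + d * b₁ * b₂) (a₁ * b₂ + b₁ * a₂) := by
  rw [memPd_iff] at hβP hγP ⊢
  obtain ⟨hint₁, n₁, A₁, hA₁, hnorm₁, hadm₁⟩ := hβP
  obtain ⟨hint₂, n₂, A₂, hA₂, hnorm₂, hadm₂⟩ := hγP
  obtain ⟨B₁, hB₁, hdB₁⟩ := exists_int_two_mul_of_norm_eq hsf hA₁ hnorm₁
  obtain ⟨B₂, hB₂, hdB₂⟩ := exists_int_two_mul_of_norm_eq hsf hA₂ hnorm₂
  have hn₂ : ¬ 3 ∣ n₂ := by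
    have : Nγ = n₂ ^ 3 := by exact_mod_cast hNγ.trans hnorm₂
    exact fun h => h3 (this ▸ dvd_pow h three_ne_zero)
  have hd4 : ¬ 4 ∣ d := fun h => by
    simpa [Int.isUnit_iff] using hsf 2 (by simpa [← sq] using h)
  have h4₁ : 4 ∣ A₁ ^ 2 - d * B₁ ^ 2 := ⟨n₁ ^ 3, by linear_combination -hdB₁⟩
  have h4₂ : 4 ∣ A₂ ^ 2 - d * B₂ ^ 2 := ⟨n₂ ^ 3, by linear_combination -hdB₂⟩
  obtain ⟨A, hA⟩ := two_dvd_mul_add_mul hd4 h4₁ h4₂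
  have hint := hint₁.mul hint₂
  rw [add_mul_sqrt_mul_add_mul_sqrt (zero_le_one.trans hd.le)] at hint
  refine ⟨hint, n₁ * n₂, A, ?_, ?_, hadm₁.mul hadm₂ hn₂ hdB₁ hdB₂ hA.symm⟩
  · have hA' : (A₁ * A₂ + d * B₁ * B₂ : ℚ) = 2 * A := by exact_mod_cast hA
    rw [hA₁, hA₂, hB₁, hB₂] at hA'
    linear_combination -hA' / 2
  · push_cast
    linear_combination (a₂ ^ 2 - d * b₂ ^ 2) * hnorm₁ + (n₁ : ℚ) ^ 3 * hnorm₂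

/-- for `β = a₁ + b₁√d` and `γ = a₂ + b₂√d` in `R_d` with `3 ∤ N(γ)`,
if `β ∈ P_d` and `γ ∈ P_d` then `βγ ∈ P_d`, where
`βγ = (a₁a₂ + d b₁b₂) + (a₁b₂ + b₁a₂)√d`. -/
theorem stmt_18 (d : ℤ) (hd : 1 < d) (hsf : Squarefree d)
    (a₁ b₁ a₂ b₂ : ℚ) (hβR : MemRd d a₁ b₁) (hγR : MemRd d a₂ b₂)
    (Nγ : ℤ) (hNγ : (Nγ : ℚ) = a₂ ^ 2 - d * b₂ ^ 2) (h3 : ¬(3 : ℤ) ∣ Nγ)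
    (hβP : MemPd d a₁ b₁) (hγP : MemPd d a₂ b₂) :
    MemPd d (a₁ * a₂ + d * b₁ * b₂) (a₁ * b₂ + b₁ * a₂) :=
  stmt_18_general d hd hsf a₁ b₁ a₂ b₂ Nγ hNγ h3 hβP hγP
end

section
/- Let d > 1 be squarefree, F = ℚ(√(−3d)), and for a positive integer e let M_e denote the ring class field of the order ℤ[e√(−3d)] in F. Let u ∈ O(d) have cubic norm, ν = u^(1/3) real, c a positive even integer, and c' its odd part. If the cube roots of unity lie in M_{c'} and [M_c : M_{c'}] = 2, then ν ∈ M_c implies ν ∈ M_{c'}. -/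
open NumberField

/-- The rational prime `p` splits completely in the subfield `M ⊆ ℂ`:
`(p)` is a product of `[M:ℚ]` distinct primes of the integral closure of `ℤ` in `M`. -/
def SplitsCompletelyC (p : ℕ) (M : IntermediateField ℚ ℂ) : Prop :=
  ∃ s : Finset (Ideal (integralClosure ℤ M)), s.card = Module.finrank ℚ M ∧
    (∀ P ∈ s, P.IsPrime) ∧
    Ideal.span {(p : integralClosure ℤ M)} = ∏ P ∈ s, P

/-- `M ⊆ ℂ` is the ring class field of the order of discriminant `-4n` in `ℚ(√-n)`,
characterized (following Cox) as the finite Galois extension of `ℚ` containing `√-n`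
in which the odd primes `p ∤ n` splitting completely are exactly those of the form
`p = x² + n y²`. -/
def IsRingClassFieldC (n : ℤ) (M : IntermediateField ℚ ℂ) : Prop :=
  FiniteDimensional ℚ M ∧ IsGalois ℚ M ∧ (∃ z : M, (z : ℂ) ^ 2 = (-n : ℤ)) ∧
  ∀ p : ℕ, p.Prime → Odd p → ¬((p : ℤ) ∣ n) →
    (SplitsCompletelyC p M ↔ ∃ x y : ℤ, (p : ℤ) = x ^ 2 + n * y ^ 2)

open Polynomial

/-!
As `M_{c'}` contains a primitive cube root of unity `ζ`, it contains `√-3 = 2ζ + 1`, hence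
`√d = √(-3c'²d) / (c'√-3)` and `u = a + b√d`. If `X³ - u` had no root in `M_{c'}` it would be
irreducible there, so `ν` would have degree 3 over `M_{c'}`, which does not divide
`[M_c : M_{c'}] = 2`. So some `w ∈ M_{c'}` has `w³ = u`, and `ν / w` is a cube root of unity.
-/

theorem Polynomial.exists_isRoot_of_natDegree_eq_three {K L : Type*} [Field K] [Field L]
    [Algebra K L] (h3 : ¬ 3 ∣ Module.finrank K L) {p : K[X]} (hp : p.natDegree = 3) {x : L}
    (hx : aeval x p = 0) : ∃ w, p.IsRoot w := by
  have : FiniteDimensional K L :=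
    Module.finite_of_finrank_pos (Nat.pos_of_ne_zero fun h ↦ h3 (h ▸ dvd_zero 3))
  by_contra! hroot
  have hirr : Irreducible p := irreducible_of_degree_le_three_of_not_isRoot (by simp [hp]) hroot
  have hdeg : (minpoly K x).natDegree = 3 := by
    rw [← minpoly.eq_of_irreducible hirr hx, natDegree_mul_leadingCoeff_inv _ hirr.ne_zero, hp]
  exact h3 (hdeg ▸ minpoly.degree_dvd (IsIntegral.of_finite K x))

theorem IntermediateField.relfinrank_eq_of_finrank_eq_mul {F E : Type*} [Field F] [Field E]
    [Algebra F E] {A B : IntermediateField F E} [FiniteDimensional F A] (hle : A ≤ B) {k : ℕ}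
    (h : Module.finrank F B = k * Module.finrank F A) : relfinrank A B = k := by
  refine Nat.eq_of_mul_eq_mul_left (Module.finrank_pos (R := F) (M := A)) ?_
  rw [finrank_bot_mul_relfinrank hle, h, mul_comm]

theorem IntermediateField.exists_pow_three_eq_of_mem {F E : Type*} [Field F] [Field E]
    [Algebra F E] {A B : IntermediateField F E} (hle : A ≤ B) (h3 : ¬ 3 ∣ relfinrank A B)
    {x : E} (hx : x ∈ B) (hx3 : x ^ 3 ∈ A) : ∃ w ∈ A, w ^ 3 = x ^ 3 := by
  rw [relfinrank_eq_finrank_of_le hle] at h3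
  obtain ⟨w, hw⟩ := exists_isRoot_of_natDegree_eq_three h3
    (natDegree_X_pow_sub_C (n := 3) (r := ⟨x ^ 3, hx3⟩)) (x := (⟨x, hx⟩ : extendScalars hle))
    (by ext; simp)
  refine ⟨w, w.2, ?_⟩
  simpa [sub_eq_zero] using congrArg ((↑) : A → E) hw

theorem mem_of_pow_eq_pow {E S : Type*} [Field E] [SetLike S E] [SubfieldClass S E] {K : S}
    {n : ℕ} (hroots : ∀ z : E, z ^ n = 1 → z ∈ K) {w x : E} (hw : w ∈ K) (hwx : w ^ n = x ^ n) :
    x ∈ K := by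
  rcases eq_or_ne n 0 with rfl | hn
  · exact hroots x (pow_zero x)
  rcases eq_or_ne x 0 with rfl | hx
  · exact zero_mem K
  have hw0 : w ≠ 0 := by rintro rfl; exact pow_ne_zero n hx (by rw [← hwx, zero_pow hn])
  have hxw : (x / w) ^ n = 1 := by rw [div_pow, hwx, div_self (pow_ne_zero n hx)]
  simpa [div_mul_cancel₀ x hw0] using mul_mem (hroots _ hxw) hw

theorem IsPrimitiveRoot.two_mul_add_one_sq {R : Type*} [CommRing R] [IsDomain R] {ζ : R}
    (hζ : IsPrimitiveRoot ζ 3) : (2 * ζ + 1) ^ 2 = -3 := by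
  have h := hζ.geom_sum_eq_zero (by norm_num)
  simp only [Finset.sum_range_succ, Finset.sum_range_zero, pow_zero, pow_one, zero_add] at h
  linear_combination 4 * h

theorem mem_of_sq_eq_neg_three_mul_sq {E S : Type*} [Field E] [NeZero (3 : E)] [SetLike S E]
    [SubfieldClass S E] {K : S} {s z y : E} (hs : s ∈ K) (hs2 : s ^ 2 = -3) (hz : z ∈ K)
    (hzy : z ^ 2 = -3 * y ^ 2) : y ∈ K := by
  have hs0 : s ≠ 0 := by rintro rfl; exact NeZero.ne (3 : E) (by linear_combination hs2)
  have hzs : z / s ∈ K := div_mem hz hs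
  have hsq : (z / s) ^ 2 = y ^ 2 := by rw [div_pow, hs2, hzy]; field_simp
  rcases sq_eq_sq_iff_eq_or_eq_neg.mp hsq with h | h
  · exact h ▸ hzs
  · simpa [h] using neg_mem hzs

theorem ofReal_sqrt_mem_of_sq_eq_neg_sq_mul_three_mul {K : IntermediateField ℚ ℂ}
    (hroots : ∀ z : ℂ, z ^ 3 = 1 → z ∈ K) {m d : ℤ} (hm : m ≠ 0) (hd : 0 ≤ d)
    (hz : ∃ z : K, (z : ℂ) ^ 2 = (-(m ^ 2 * 3 * d) : ℤ)) : (Real.sqrt d : ℂ) ∈ K := by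
  obtain ⟨z, hz⟩ := hz
  have hζ := Complex.isPrimitiveRoot_exp 3 (by norm_num)
  refine mem_of_sq_eq_neg_three_mul_sq (E := ℂ) (K := K) (z := (z : ℂ) / m)
    ?_ hζ.two_mul_add_one_sq (div_mem z.2 (intCast_mem K m)) ?_
  · exact add_mem (mul_mem (ofNat_mem K 2) (hroots _ hζ.pow_eq_one)) (one_mem K)
  · rw [div_pow, hz, ← Complex.ofReal_pow, Real.sq_sqrt (by exact_mod_cast hd)]
    push_cast
    field_simp

theorem stmt_19_general (d : ℤ) (hd : 1 < d)
    (a b : ℚ)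
    (ν : ℝ) (hν : ν ^ 3 = (a : ℝ) + b * Real.sqrt d)
    (c' : ℕ) (hc' : Odd c')
    (Mc Mc' : IntermediateField ℚ ℂ) (hle : Mc' ≤ Mc)
    (hMc' : IsRingClassFieldC ((c' : ℤ) ^ 2 * 3 * d) Mc')
    (hroots : ∀ z : ℂ, z ^ 3 = 1 → z ∈ Mc')
    (hdeg : Module.finrank ℚ Mc = 2 * Module.finrank ℚ Mc') :
    (ν : ℂ) ∈ Mc → (ν : ℂ) ∈ Mc' := by
  intro hν_mem
  have : FiniteDimensional ℚ Mc' := hMc'.1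
  have hsqrt : (Real.sqrt d : ℂ) ∈ Mc' := ofReal_sqrt_mem_of_sq_eq_neg_sq_mul_three_mul hroots
    (by exact_mod_cast hc'.pos.ne') (by omega) hMc'.2.2.1
  have hν3 : (ν : ℂ) ^ 3 ∈ Mc' := by
    rw [← Complex.ofReal_pow, hν]
    push_cast
    exact add_mem (SubfieldClass.ratCast_mem _ a) (mul_mem (SubfieldClass.ratCast_mem _ b) hsqrt)
  have hrel : IntermediateField.relfinrank Mc' Mc = 2 :=
    IntermediateField.relfinrank_eq_of_finrank_eq_mul hle hdeg
  obtain ⟨w, hw, hwν⟩ :=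
    IntermediateField.exists_pow_three_eq_of_mem hle (by rw [hrel]; decide) hν_mem hν3
  exact mem_of_pow_eq_pow hroots hw hwν

/-- with `M_e` the ring class field of the order `ℤ[e√-3d]` in
`F = ℚ(√-3d)`, `u ∈ O(d)` of cubic norm, `ν = u^(1/3)` real, `c` a positive even
integer with odd part `c'`: if the cube roots of unity lie in `M_{c'}` and
`[M_c : M_{c'}] = 2`, then `ν ∈ M_c` implies `ν ∈ M_{c'}`. -/
theorem stmt_19 (d : ℤ) (hd : 1 < d) (hsf : Squarefree d)
    (a b : ℚ) (huint : IsIntegral ℤ ((a : ℝ) + b * Real.sqrt d))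
    (n : ℤ) (hn : a ^ 2 - d * b ^ 2 = (n : ℚ) ^ 3)
    (ν : ℝ) (hν : ν ^ 3 = (a : ℝ) + b * Real.sqrt d)
    (c c' : ℕ) (hc : 0 < c) (hce : Even c) (hc' : Odd c') (hcc' : ∃ k : ℕ, c = 2 ^ k * c')
    (Mc Mc' : IntermediateField ℚ ℂ) (hle : Mc' ≤ Mc)
    (hMc : IsRingClassFieldC ((c : ℤ) ^ 2 * 3 * d) Mc)
    (hMc' : IsRingClassFieldC ((c' : ℤ) ^ 2 * 3 * d) Mc')
    (hroots : ∀ z : ℂ, z ^ 3 = 1 → z ∈ Mc')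
    (hdeg : Module.finrank ℚ Mc = 2 * Module.finrank ℚ Mc') :
    (ν : ℂ) ∈ Mc → (ν : ℂ) ∈ Mc' :=
  stmt_19_general d hd a b ν hν c' hc' Mc Mc' hle hMc' hroots hdeg
end
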